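/- Fix a real constant β ∈ [0, √2−1), and write β₁ = β+1 and β₂ = 2β+1. For a real ℏ ≥ 7, define x(ℏ) = (β₁ℏ − β₂ + √((β₁ℏ − β₂)² + 8ℏ))/4 and Ψ(ℏ) = ℏ/x(ℏ) + x(ℏ)/ℏ − β/ℏ. Then Ψ(ℏ) ≥ Ψ(7) for every real ℏ ≥ 7. -/
import Mathlib


/-- `x(ℏ) = (β₁ℏ − β₂ + √((β₁ℏ − β₂)² + 8ℏ))/4`, where `β₁ = β+1` and `β₂ = 2β+1`;
this is the positive root of `ℏ = (2x² + β₂x)/(β₁x + 1)`. -/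
noncomputable def srrX (β H : ℝ) : ℝ :=
  ((β + 1) * H - (2 * β + 1) + Real.sqrt (((β + 1) * H - (2 * β + 1)) ^ 2 + 8 * H)) / 4

/-- `Ψ(ℏ) = ℏ/x(ℏ) + x(ℏ)/ℏ − β/ℏ`. -/
noncomputable def srrPsi (β H : ℝ) : ℝ :=
  H / srrX β H + srrX β H / H - β / H

/-- `srrX β H` is positive when `H ≥ 7` and `β ≥ 0`. -/
lemma srrX_pos (β H : ℝ) (hβ0 : 0 ≤ β) (hH : 7 ≤ H) : 0 < srrX β H := by
  unfold srrX
  have hd : 0 < (β + 1) * H - (2 * β + 1) := by nlinarith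
  have hs : 0 ≤ Real.sqrt (((β + 1) * H - (2 * β + 1)) ^ 2 + 8 * H) := Real.sqrt_nonneg _
  linarith

/-- The defining quadratic relation for `srrX`. -/
lemma srrX_rel (β H : ℝ) (hH : 0 ≤ H) :
    H * ((β + 1) * srrX β H + 1) = 2 * (srrX β H) ^ 2 + (2 * β + 1) * srrX β H := by
  set d := (β + 1) * H - (2 * β + 1) with hd
  have hnn : 0 ≤ d ^ 2 + 8 * H := by positivity
  have hs : Real.sqrt (d ^ 2 + 8 * H) ^ 2 = d ^ 2 + 8 * H := Real.sq_sqrt hnn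
  show H * ((β + 1) * ((d + Real.sqrt (d ^ 2 + 8 * H)) / 4) + 1)
      = 2 * ((d + Real.sqrt (d ^ 2 + 8 * H)) / 4) ^ 2
        + (2 * β + 1) * ((d + Real.sqrt (d ^ 2 + 8 * H)) / 4)
  have hβ1 : (β + 1) * H = d + (2 * β + 1) := by rw [hd]; ring
  linear_combination ((d + Real.sqrt (d ^ 2 + 8 * H)) / 4) * hβ1 - (1 / 8) * hs

/-- `srrX β` is monotone for `H ≥ 7`, `β ≥ 0`. -/
lemma srrX_mono (β H : ℝ) (hβ0 : 0 ≤ β) (hH : 7 ≤ H) : srrX β 7 ≤ srrX β H := by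
  unfold srrX
  have hd7 : 0 ≤ (β + 1) * 7 - (2 * β + 1) := by nlinarith
  have hdm : (β + 1) * 7 - (2 * β + 1) ≤ (β + 1) * H - (2 * β + 1) := by nlinarith
  have hsq : ((β + 1) * 7 - (2 * β + 1)) ^ 2 + 8 * 7
      ≤ ((β + 1) * H - (2 * β + 1)) ^ 2 + 8 * H := by nlinarith
  have hs := Real.sqrt_le_sqrt hsq
  rw [div_le_div_iff₀ (by norm_num) (by norm_num)]
  nlinarith [add_le_add hdm hs]

/-- Monotonicity of the rational function `g`. -/
lemma g_mono (β a b : ℝ) (ha : 0 < a) (hab : a ≤ b) (hβ0 : 0 ≤ β)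
    (hβ2 : β ^ 2 + 2 * β ≤ 1) :
    (2 * a + (2 * β + 1)) / ((β + 1) * a + 1)
      + (a - β) * ((β + 1) * a + 1) / (a * (2 * a + (2 * β + 1)))
    ≤ (2 * b + (2 * β + 1)) / ((β + 1) * b + 1)
      + (b - β) * ((β + 1) * b + 1) / (b * (2 * b + (2 * β + 1))) := by
  have hb : 0 < b := lt_of_lt_of_le ha hab
  have hda : 0 < (β + 1) * a + 1 := by nlinarith
  have hdb : 0 < (β + 1) * b + 1 := by nlinarith
  have hna : 0 < a * (2 * a + (2 * β + 1)) := by nlinarith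
  have hnb : 0 < b * (2 * b + (2 * β + 1)) := by nlinarith
  rw [div_add_div _ _ (ne_of_gt hda) (ne_of_gt hna),
      div_add_div _ _ (ne_of_gt hdb) (ne_of_gt hnb),
      div_le_div_iff₀ (by positivity) (by positivity)]
  -- coefficient positivity facts
  have h4 : 0 ≤ 11 + 2 * β - 15 * β ^ 2 - 6 * β ^ 3 := by nlinarith [sq_nonneg β, hβ2]
  have h5 : 0 ≤ 1 + 4 * β - 3 * β ^ 2 - 2 * β ^ 3 := by nlinarith [sq_nonneg β, hβ2]
  have h6 : 0 ≤ 3 - 9 * β + 5 * β ^ 2 + 13 * β ^ 3 + 4 * β ^ 4 := by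
    nlinarith [sq_nonneg (14 * β - 5), hβ2, pow_le_pow_left₀ hβ0 (le_of_lt (by nlinarith : β < 1)) 3]
  have hQ : 0 ≤ β + 2 * β ^ 2 + (a + b) * (3 * β + 3 * β ^ 2 + 2 * β ^ 3)
      + (a ^ 2 + b ^ 2) * (2 * β + 2 * β ^ 2)
      + a * b * ((11 + 2 * β - 15 * β ^ 2 - 6 * β ^ 3) * β)
      + a * b * (a + b) * (1 + 4 * β - 3 * β ^ 2 - 2 * β ^ 3)
      + a ^ 2 * b ^ 2 * (3 - 9 * β + 5 * β ^ 2 + 13 * β ^ 3 + 4 * β ^ 4) := by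
    have h1 : 0 ≤ a * b * ((11 + 2 * β - 15 * β ^ 2 - 6 * β ^ 3) * β) := by positivity
    have h2 : 0 ≤ a * b * (a + b) * (1 + 4 * β - 3 * β ^ 2 - 2 * β ^ 3) := by positivity
    have h3 : 0 ≤ a ^ 2 * b ^ 2 * (3 - 9 * β + 5 * β ^ 2 + 13 * β ^ 3 + 4 * β ^ 4) := by
      positivity
    nlinarith [sq_nonneg a, sq_nonneg b, mul_pos ha hb]
  nlinarith [mul_nonneg (sub_nonneg.mpr hab) hQ]

/-- for `0 ≤ β < √2 − 1`, the function `Ψ` satisfies `Ψ(ℏ) ≥ Ψ(7)`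
for every real `ℏ ≥ 7`. -/
theorem srr_psi_min_at_seven (β : ℝ) (hβ0 : 0 ≤ β) (hβ1 : β < Real.sqrt 2 - 1)
    (H : ℝ) (hH : 7 ≤ H) :
    srrPsi β 7 ≤ srrPsi β H := by
  have hβ2 : β ^ 2 + 2 * β ≤ 1 := by
    have h2 : (β + 1) < Real.sqrt 2 := by linarith
    have h2' : (β + 1) ^ 2 < 2 := by
      have := Real.sq_sqrt (by norm_num : (2:ℝ) ≥ 0)
      nlinarith [Real.sqrt_nonneg 2]
    nlinarith
  set a := srrX β 7 with hadef
  set b := srrX β H with hbdef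
  have ha : 0 < a := srrX_pos β 7 hβ0 (by norm_num)
  have hb : 0 < b := srrX_pos β H hβ0 hH
  have hab : a ≤ b := srrX_mono β H hβ0 hH
  have hH0 : (0:ℝ) < H := by linarith
  have hra : 7 * ((β + 1) * a + 1) = 2 * a ^ 2 + (2 * β + 1) * a :=
    srrX_rel β 7 (by norm_num)
  have hrb : H * ((β + 1) * b + 1) = 2 * b ^ 2 + (2 * β + 1) * b :=
    srrX_rel β H (by linarith)
  have hda : 0 < (β + 1) * a + 1 := by nlinarith
  have hdb : 0 < (β + 1) * b + 1 := by nlinarith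
  have hna : 0 < 2 * a + (2 * β + 1) := by nlinarith
  have hnb : 0 < 2 * b + (2 * β + 1) := by nlinarith
  have e1 : (7:ℝ) / a = (2 * a + (2 * β + 1)) / ((β + 1) * a + 1) := by
    rw [div_eq_div_iff (ne_of_gt ha) (ne_of_gt hda)]
    linear_combination hra
  have e2 : H / b = (2 * b + (2 * β + 1)) / ((β + 1) * b + 1) := by
    rw [div_eq_div_iff (ne_of_gt hb) (ne_of_gt hdb)]
    linear_combination hrb
  have e3 : (a - β) / 7 = (a - β) * ((β + 1) * a + 1) / (a * (2 * a + (2 * β + 1))) := by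
    rw [div_eq_div_iff (by norm_num) (by positivity)]
    linear_combination -(a - β) * hra
  have e4 : (b - β) / H = (b - β) * ((β + 1) * b + 1) / (b * (2 * b + (2 * β + 1))) := by
    rw [div_eq_div_iff (ne_of_gt hH0) (by positivity)]
    linear_combination -(b - β) * hrb
  have key := g_mono β a b ha hab hβ0 hβ2
  have lhs : srrPsi β 7 = 7 / a + (a - β) / 7 := by
    unfold srrPsi
    rw [← hadef]
    ring
  have rhs : srrPsi β H = H / b + (b - β) / H := by
    unfold srrPsi
    rw [← hbdef]
    ring
  rw [lhs, rhs, e1, e2, e3, e4]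
  exact key
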